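/- Let m, n, d be integers with 2 ≤ m ≤ n ≤ d and d ≥ m + n, let t be an integer with 0 < t < m, and let ζ ∈ k be a primitive d-th root of unity. If P ∈ k[x_1,…,x_m,y_1,…,y_n] is homogeneous of total degree d − m − n and satisfies ζ^{n+t} · σ_ζ(P) = P, then P = 0. -/
import Mathlib


open MvPolynomial

/-- The `k`-algebra endomorphism of `k[x_1,…,x_m,y_1,…,y_n]` fixing the `x` variables and
scaling each `y` variable by `ζ`. -/
noncomputable def sigmaZeta (k : Type*) [Field k] (m n : ℕ) (ζ : k) :
    MvPolynomial (Fin m ⊕ Fin n) k →ₐ[k] MvPolynomial (Fin m ⊕ Fin n) k :=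
  aeval (Sum.elim (fun i => X (Sum.inl i)) (fun j => ζ • X (Sum.inr j)))

/-- The total `y`-degree of a monomial exponent vector. -/
def yDeg {m n : ℕ} (s : Fin m ⊕ Fin n →₀ ℕ) : ℕ :=
  s.sum fun v e => Sum.elim (fun _ => 0) (fun _ => e) v

lemma yDeg_le {m n : ℕ} (s : Fin m ⊕ Fin n →₀ ℕ) :
    yDeg s ≤ s.sum fun _ e => e := by
  apply Finsupp.sum_le_sum
  rintro (i | j) _ <;> simp

lemma sigmaZeta_monomial (k : Type*) [Field k] (m n : ℕ) (ζ : k)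
    (s : Fin m ⊕ Fin n →₀ ℕ) (c : k) :
    sigmaZeta k m n ζ (monomial s c) = monomial s (ζ ^ yDeg s * c) := by
  rw [sigmaZeta, aeval_monomial, monomial_eq]
  have key : (s.prod fun v e =>
      (Sum.elim (fun i => X (Sum.inl i)) (fun j => ζ • X (Sum.inr j)) v : MvPolynomial _ k) ^ e)
      = C (ζ ^ yDeg s) * s.prod fun v e => X v ^ e := by
    rw [Finsupp.prod, Finsupp.prod, yDeg, Finsupp.sum,
      ← Finset.prod_pow_eq_pow_sum, map_prod, ← Finset.prod_mul_distrib]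
    apply Finset.prod_congr rfl
    rintro (i | j) _
    · simp
    · simp [Algebra.smul_def, algebraMap_eq, mul_pow]
  rw [key, algebraMap_eq, map_mul]
  ring

lemma coeff_sigmaZeta (k : Type*) [Field k] (m n : ℕ) (ζ : k)
    (P : MvPolynomial (Fin m ⊕ Fin n) k) (s : Fin m ⊕ Fin n →₀ ℕ) :
    coeff s (sigmaZeta k m n ζ P) = ζ ^ yDeg s * coeff s P := by
  conv_lhs => rw [P.as_sum, map_sum]
  rw [coeff_sum]
  simp only [sigmaZeta_monomial, coeff_monomial]
  by_cases hs : s ∈ P.support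
  · rw [Finset.sum_eq_single s (fun b _ hb => by rw [if_neg hb]) (fun h => (h hs).elim), if_pos rfl]
  · rw [Finset.sum_eq_zero, notMem_support_iff.mp hs, mul_zero]
    intro b hb
    rw [if_neg]
    rintro rfl
    exact hs hb

/-- For `2 ≤ m ≤ n ≤ d`, `d ≥ m + n` and `0 < t < m`: a homogeneous polynomial of degree
`d - m - n` satisfying `ζ^{n+t} · σ_ζ(P) = P` is zero.  This is the vanishing
`H^*(O_X ⊗ χ^{j-i}) = 0` for `0 < i - j < m`. -/
theorem no_invariant_sections_twisted (k : Type*) [Field k] (m n d : ℕ)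
    (hm : 2 ≤ m) (hmn : m ≤ n) (hnd : n ≤ d) (hd : m + n ≤ d)
    (t : ℕ) (ht0 : 0 < t) (htm : t < m)
    (ζ : k) (hζ : IsPrimitiveRoot ζ d)
    (P : MvPolynomial (Fin m ⊕ Fin n) k)
    (hhom : P.IsHomogeneous (d - m - n))
    (heig : ζ ^ (n + t) • sigmaZeta k m n ζ P = P) :
    P = 0 := by
  ext s
  rw [coeff_zero]
  by_contra hc
  have h1 := congrArg (coeff s) heig
  rw [coeff_smul, coeff_sigmaZeta, smul_eq_mul, ← mul_assoc, ← pow_add] at h1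
  have hpow : ζ ^ (n + t + yDeg s) = 1 :=
    mul_right_cancel₀ hc (h1.trans (one_mul (coeff s P)).symm)
  have hdvd : d ∣ n + t + yDeg s := (hζ.pow_eq_one_iff_dvd _).mp hpow
  have hdeg : (s.sum fun _ e => e) = d - m - n := by
    have := hhom hc
    simpa [Finsupp.weight_apply, Finsupp.sum, mul_comm] using this
  have hB : yDeg s ≤ d - m - n := hdeg ▸ yDeg_le s
  have := Nat.le_of_dvd (by omega) hdvd
  omega
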